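/- Let n_1, n_2 ≥ 0. Let μ, μ' ∈ ℝ^{n_1} and ν, ν' ∈ ℝ^{n_2} be nonincreasing vectors with all entries nonnegative. Assume that Σ_{i=1}^k μ_i ≤ Σ_{i=1}^k μ'_i for every 1 ≤ k ≤ n_1 and Σ_{i=1}^k ν_i ≤ Σ_{i=1}^k ν'_i for every 1 ≤ k ≤ n_2. Let Ξ (respectively Ξ') be the nonincreasing vector in ℝ^{n_1+n_2} whose multiset of entries is {μ_1, …, μ_{n_1}} ⊎ {ν_1, …, ν_{n_2}} (respectively {μ'_1, …, μ'_{n_1}} ⊎ {ν'_1, …, ν'_{n_2}}). Then Σ_{i=1}^k Ξ_i ≤ Σ_{i=1}^k Ξ'_i for every 1 ≤ k ≤ n_1+n_2; moreover, if Ξ = Ξ', then μ = μ' and ν = ν'. -/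

import Mathlib

/-- The first `k` entries' partial sum of a vector in `ℝ^n`. -/
def psum {n : ℕ} (v : Fin n → ℝ) (k : ℕ) : ℝ :=
  ∑ i : Fin n, if (i : ℕ) < k then v i else 0

/-- The multiset of entries of a vector in `ℝ^n`. -/
def entries {n : ℕ} (v : Fin n → ℝ) : Multiset ℝ :=
  Finset.univ.val.map v

/-!
The first `k` entries of an antitone vector have the largest sum among all `k`-element
sub-multisets of its entries. Hence `psum Ξ (j + l) ≥ psum μ j + psum ν l`, and splitting the
first `k` entries of `Ξ` according to whether they come from `μ` or `ν` gives the reverse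
inequality for some `j + l = k`: so `psum Ξ k` is the maximum of `psum μ j + psum ν l` over
`j + l = k`, which is monotone in the partial sums of `μ` and `ν`. For rigidity, given `j`, let `l`
be the number of entries of `ν` exceeding `μ j`; then the first `j + l` entries of `Ξ` are the
first `j` of `μ` together with the first `l` of `ν`, so the maximum is attained at `(j, l)` and
`Ξ = Ξ'` forces `psum μ j = psum μ' j`.
-/

theorem Multiset.sum_le_sum_of_le_add_of_separated {α : Type*} [AddCommMonoid α] [LinearOrder α]
    [IsOrderedAddMonoid α] {S T C : Multiset α} {t : α} (hS : S ≤ T + C) (hcard : card S = card T)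
    (hT : ∀ x ∈ T, t ≤ x) (hC : ∀ x ∈ C, x ≤ t) : S.sum ≤ T.sum := by
  have hS₁ : S - C ≤ T := Multiset.sub_le_iff_le_add.2 hS
  obtain ⟨R, rfl⟩ := Multiset.le_iff_exists_add.1 hS₁
  have hsplit := Multiset.sub_add_inter S C
  have hcardR : card (S ∩ C) = card R := by
    have := congrArg card hsplit
    rw [card_add] at this hcard
    omega
  calc S.sum = (S - C).sum + (S ∩ C).sum := by rw [← sum_add, hsplit]
    _ ≤ (S - C).sum + card (S ∩ C) • t := by
      gcongr
      exact sum_le_card_nsmul _ _ fun x hx => hC x (Multiset.mem_of_le Multiset.inter_le_right hx)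
    _ ≤ (S - C).sum + R.sum := by
      gcongr
      rw [hcardR]
      exact card_nsmul_le_sum fun x hx => hT x (Multiset.mem_add.2 (Or.inr hx))
    _ = ((S - C) + R).sum := (sum_add _ _).symm

theorem Fin.exists_lt_iff_lt_of_antitone {α : Type*} [LinearOrder α] {n : ℕ} {v : Fin n → α}
    (hv : Antitone v) (t : α) : ∃ l ≤ n, ∀ i : Fin n, (i : ℕ) < l ↔ t < v i := by
  classical
  have hP : ∃ l, ∀ i : Fin n, l ≤ (i : ℕ) → v i ≤ t := ⟨n, fun i hi => absurd i.isLt (by omega)⟩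
  refine ⟨Nat.find hP, Nat.find_min' hP fun i hi => absurd i.isLt (by omega), fun i => ⟨?_, ?_⟩⟩
  · intro hi
    obtain ⟨i', hii', hti'⟩ : ∃ i' : Fin n, (i : ℕ) ≤ i' ∧ t < v i' := by
      simpa using Nat.find_min hP hi
    exact hti'.trans_le (hv (Fin.le_def.2 hii'))
  · intro hti
    by_contra hi
    exact (Nat.find_spec hP i (not_lt.1 hi)).not_gt hti

section PartialSums

open Finset

variable {n : ℕ}

def topEntries (v : Fin n → ℝ) (k : ℕ) : Multiset ℝ :=
  (univ.filter fun i : Fin n => (i : ℕ) < k).val.map v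

def bottomEntries (v : Fin n → ℝ) (k : ℕ) : Multiset ℝ :=
  (univ.filter fun i : Fin n => ¬(i : ℕ) < k).val.map v

theorem psum_eq_sum_topEntries (v : Fin n → ℝ) (k : ℕ) : psum v k = (topEntries v k).sum := by
  rw [psum, ← sum_filter, sum_eq_multiset_sum, topEntries]

theorem psum_zero (v : Fin n → ℝ) : psum v 0 = 0 := by
  simp [psum]

theorem psum_succ (v : Fin n → ℝ) {k : ℕ} (hk : k < n) :
    psum v (k + 1) = psum v k + v ⟨k, hk⟩ := by
  have hmem : (⟨k, hk⟩ : Fin n) ∈ univ.filter fun i : Fin n => (i : ℕ) < k + 1 := by simp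
  rw [psum, psum, ← sum_filter, ← sum_filter, ← sum_erase_add _ _ hmem]
  congr 2
  ext i
  simp only [Order.lt_add_one_iff, mem_erase, ne_eq, Fin.ext_iff, mem_filter, mem_univ, true_and]
  omega

theorem forall_psum_le_of_forall_one_le {v w : Fin n → ℝ}
    (h : ∀ k, 1 ≤ k → k ≤ n → psum v k ≤ psum w k) : ∀ k ≤ n, psum v k ≤ psum w k := by
  rintro (_ | k) hk
  · simp [psum_zero]
  · exact h _ k.succ_pos hk

theorem eq_of_forall_psum_eq {v w : Fin n → ℝ} (h : ∀ k ≤ n, psum v k = psum w k) : v = w := by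
  funext i
  have := h (i + 1) i.isLt
  rw [psum_succ v i.isLt, psum_succ w i.isLt, h i i.isLt.le] at this
  simpa using this

theorem card_entries (v : Fin n → ℝ) : Multiset.card (entries v) = n := by
  simp [entries]

theorem card_topEntries (v : Fin n → ℝ) {k : ℕ} (hk : k ≤ n) :
    Multiset.card (topEntries v k) = k := by
  rw [topEntries, Multiset.card_map, ← card_def, Fin.card_filter_val_lt, min_eq_right hk]

theorem topEntries_add_bottomEntries (v : Fin n → ℝ) (k : ℕ) :
    topEntries v k + bottomEntries v k = entries v := by
  rw [topEntries, bottomEntries, entries, ← Multiset.map_add, filter_val, filter_val,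
    Multiset.filter_add_not]

theorem topEntries_le_entries (v : Fin n → ℝ) (k : ℕ) : topEntries v k ≤ entries v :=
  topEntries_add_bottomEntries v k ▸ Multiset.le_add_right _ _

theorem psum_self (v : Fin n → ℝ) : psum v n = (entries v).sum := by
  rw [psum_eq_sum_topEntries, topEntries, entries, filter_true_of_mem fun i _ => i.isLt]

variable {v : Fin n → ℝ} {k : ℕ} {x : ℝ}

theorem mem_topEntries : x ∈ topEntries v k ↔ ∃ i : Fin n, (i : ℕ) < k ∧ v i = x := by
  simp [topEntries]

theorem mem_bottomEntries : x ∈ bottomEntries v k ↔ ∃ i : Fin n, k ≤ (i : ℕ) ∧ v i = x := by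
  simp [bottomEntries]

theorem le_of_mem_topEntries (hv : Antitone v) (hx : x ∈ topEntries v k) (p : Fin n)
    (hp : k ≤ p + 1) : v p ≤ x := by
  obtain ⟨i, hi, rfl⟩ := mem_topEntries.1 hx
  exact hv (Fin.le_def.2 (by omega))

theorem le_of_mem_bottomEntries (hv : Antitone v) (hx : x ∈ bottomEntries v k) (p : Fin n)
    (hp : (p : ℕ) ≤ k) : x ≤ v p := by
  obtain ⟨i, hi, rfl⟩ := mem_bottomEntries.1 hx
  exact hv (Fin.le_def.2 (by omega))

theorem sum_le_psum_card (hv : Antitone v) {S : Multiset ℝ}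
    (hS : S ≤ entries v) : S.sum ≤ psum v (Multiset.card S) := by
  have hSn : Multiset.card S ≤ n := card_entries v ▸ Multiset.card_le_card hS
  rcases Nat.eq_zero_or_pos (Multiset.card S) with h | h
  · simp [Multiset.card_eq_zero.1 h, psum_zero]
  · let p : Fin n := ⟨Multiset.card S - 1, by omega⟩
    rw [psum_eq_sum_topEntries]
    refine Multiset.sum_le_sum_of_le_add_of_separated (t := v p)
      ((topEntries_add_bottomEntries v _).symm ▸ hS) (card_topEntries v hSn).symm
      (fun x hx => le_of_mem_topEntries hv hx p le_tsub_add)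
      (fun x hx => le_of_mem_bottomEntries hv hx p (Nat.sub_le _ _))

end PartialSums

section Merge

variable {n₁ n₂ m : ℕ} {μ : Fin n₁ → ℝ} {ν : Fin n₂ → ℝ} {Ξ : Fin m → ℝ}

theorem psum_add_psum_le_psum (hΞ : Antitone Ξ) (hE : entries Ξ = entries μ + entries ν)
    {j l : ℕ} (hj : j ≤ n₁) (hl : l ≤ n₂) : psum μ j + psum ν l ≤ psum Ξ (j + l) := by
  have hS : topEntries μ j + topEntries ν l ≤ entries Ξ :=
    hE ▸ add_le_add (topEntries_le_entries μ j) (topEntries_le_entries ν l)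
  simpa [Multiset.card_add, card_topEntries μ hj, card_topEntries ν hl, ← psum_eq_sum_topEntries]
    using sum_le_psum_card hΞ hS

theorem exists_psum_le_psum_add_psum (hμ : Antitone μ) (hν : Antitone ν)
    (hE : entries Ξ = entries μ + entries ν) {k : ℕ} (hk : k ≤ m) :
    ∃ j ≤ n₁, ∃ l ≤ n₂, j + l = k ∧ psum Ξ k ≤ psum μ j + psum ν l := by
  set S := topEntries Ξ k
  have hS : S ≤ entries μ + entries ν := hE ▸ topEntries_le_entries Ξ k
  have hS₁ : S - entries ν ≤ entries μ := Multiset.sub_le_iff_le_add.2 hS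
  have hS₂ : S ∩ entries ν ≤ entries ν := Multiset.inter_le_right
  have hsplit : S - entries ν + S ∩ entries ν = S := Multiset.sub_add_inter _ _
  refine ⟨_, card_entries μ ▸ Multiset.card_le_card hS₁,
    _, card_entries ν ▸ Multiset.card_le_card hS₂, ?_, ?_⟩
  · rw [← Multiset.card_add, hsplit, card_topEntries Ξ hk]
  · calc psum Ξ k = (S - entries ν).sum + (S ∩ entries ν).sum := by
          rw [← Multiset.sum_add, hsplit, psum_eq_sum_topEntries]
      _ ≤ _ := add_le_add (sum_le_psum_card hμ hS₁) (sum_le_psum_card hν hS₂)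

theorem exists_psum_add_le_psum_add_psum (hμ : Antitone μ) (hν : Antitone ν)
    (hE : entries Ξ = entries μ + entries ν) {j : ℕ} (hj : j ≤ n₁) :
    ∃ l ≤ n₂, psum Ξ (j + l) ≤ psum μ j + psum ν l := by
  have hm : m = n₁ + n₂ := by
    simpa only [Multiset.card_add, card_entries] using congrArg Multiset.card hE
  rcases hj.eq_or_lt with rfl | hjn
  · refine ⟨n₂, le_rfl, le_of_eq ?_⟩
    rw [← hm, psum_self, psum_self, psum_self, hE, Multiset.sum_add]
  · let p : Fin n₁ := ⟨j, hjn⟩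
    obtain ⟨l, hl, hνl⟩ := Fin.exists_lt_iff_lt_of_antitone hν (μ p)
    refine ⟨l, hl, ?_⟩
    have hsplit : entries Ξ =
        (topEntries μ j + topEntries ν l) + (bottomEntries μ j + bottomEntries ν l) := by
      rw [hE, ← topEntries_add_bottomEntries μ j, ← topEntries_add_bottomEntries ν l,
        add_add_add_comm]
    rw [psum_eq_sum_topEntries, psum_eq_sum_topEntries, psum_eq_sum_topEntries, ← Multiset.sum_add]
    refine Multiset.sum_le_sum_of_le_add_of_separated (t := μ p)
      (hsplit ▸ topEntries_le_entries Ξ (j + l)) ?_ ?_ ?_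
    · rw [Multiset.card_add, card_topEntries Ξ (by omega), card_topEntries μ hj,
        card_topEntries ν hl]
    · intro x hx
      rcases Multiset.mem_add.1 hx with hx | hx
      · exact le_of_mem_topEntries hμ hx p j.le_succ
      · obtain ⟨i, hi, rfl⟩ := mem_topEntries.1 hx
        exact ((hνl i).1 hi).le
    · intro x hx
      rcases Multiset.mem_add.1 hx with hx | hx
      · exact le_of_mem_bottomEntries hμ hx p le_rfl
      · obtain ⟨i, hi, rfl⟩ := mem_bottomEntries.1 hx
        exact not_lt.1 fun h => hi.not_gt ((hνl i).2 h)

end Merge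

theorem psum_eq_psum_of_entries_add_eq {n₁ n₂ m : ℕ} {μ μ' : Fin n₁ → ℝ} {ν ν' : Fin n₂ → ℝ}
    {Ξ : Fin m → ℝ} (hμ : Antitone μ) (hν : Antitone ν) (hΞ : Antitone Ξ)
    (hE : entries Ξ = entries μ + entries ν) (hE' : entries Ξ = entries μ' + entries ν')
    (hμμ' : ∀ j ≤ n₁, psum μ j ≤ psum μ' j) (hνν' : ∀ l ≤ n₂, psum ν l ≤ psum ν' l) {j : ℕ}
    (hj : j ≤ n₁) : psum μ j = psum μ' j := by
  obtain ⟨l, hl, hle⟩ := exists_psum_add_le_psum_add_psum hμ hν hE hj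
  linarith [psum_add_psum_le_psum hΞ hE' hj hl, hμμ' j hj, hνν' l hl]

theorem stmt2_general (n₁ n₂ : ℕ)
    (μ μ' : Fin n₁ → ℝ) (ν ν' : Fin n₂ → ℝ)
    (hμ : Antitone μ)
    (hν : Antitone ν)
    (hμps : ∀ k, 1 ≤ k → k ≤ n₁ → psum μ k ≤ psum μ' k)
    (hνps : ∀ k, 1 ≤ k → k ≤ n₂ → psum ν k ≤ psum ν' k)
    (Ξ Ξ' : Fin (n₁ + n₂) → ℝ)
    (hΞ'mono : Antitone Ξ')
    (hΞ : entries Ξ = entries μ + entries ν)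
    (hΞ' : entries Ξ' = entries μ' + entries ν') :
    (∀ k, 1 ≤ k → k ≤ n₁ + n₂ → psum Ξ k ≤ psum Ξ' k) ∧
      (Ξ = Ξ' → μ = μ' ∧ ν = ν') := by
  have hμμ' := forall_psum_le_of_forall_one_le hμps
  have hνν' := forall_psum_le_of_forall_one_le hνps
  refine ⟨fun k _ hk => ?_, ?_⟩
  · obtain ⟨j, hj, l, hl, rfl, hle⟩ := exists_psum_le_psum_add_psum hμ hν hΞ hk
    linarith [psum_add_psum_le_psum hΞ'mono hΞ' hj hl, hμμ' j hj, hνν' l hl]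
  · rintro rfl
    exact ⟨eq_of_forall_psum_eq fun j hj =>
        psum_eq_psum_of_entries_add_eq hμ hν hΞ'mono hΞ hΞ' hμμ' hνν' hj,
      eq_of_forall_psum_eq fun l hl =>
        psum_eq_psum_of_entries_add_eq hν hμ hΞ'mono (by rw [hΞ, add_comm]) (by rw [hΞ', add_comm])
          hνν' hμμ' hl⟩

theorem stmt2 (n₁ n₂ : ℕ)
    (μ μ' : Fin n₁ → ℝ) (ν ν' : Fin n₂ → ℝ)
    (hμ : Antitone μ) (hμ' : Antitone μ')
    (hν : Antitone ν) (hν' : Antitone ν')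
    (hμ0 : ∀ i, 0 ≤ μ i) (hμ'0 : ∀ i, 0 ≤ μ' i)
    (hν0 : ∀ i, 0 ≤ ν i) (hν'0 : ∀ i, 0 ≤ ν' i)
    (hμps : ∀ k, 1 ≤ k → k ≤ n₁ → psum μ k ≤ psum μ' k)
    (hνps : ∀ k, 1 ≤ k → k ≤ n₂ → psum ν k ≤ psum ν' k)
    (Ξ Ξ' : Fin (n₁ + n₂) → ℝ)
    (hΞmono : Antitone Ξ) (hΞ'mono : Antitone Ξ')
    (hΞ : entries Ξ = entries μ + entries ν)
    (hΞ' : entries Ξ' = entries μ' + entries ν') :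
    (∀ k, 1 ≤ k → k ≤ n₁ + n₂ → psum Ξ k ≤ psum Ξ' k) ∧
      (Ξ = Ξ' → μ = μ' ∧ ν = ν') :=
  stmt2_general n₁ n₂ μ μ' ν ν' hμ hν hμps hνps Ξ Ξ' hΞ'mono hΞ hΞ'
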